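/- Let (aᵢ) be a sequence in ℝ² with ‖aᵢ‖ → 0, and let (εᵢ) be signs produced blockwise so that the signed sum over the m-th block has norm at most 6/(m+1)². Then the full series ∑ εᵢ aᵢ is Cauchy, hence converges. -/

import Mathlib

/-!
Grouped into the blocks `[M m, M (m + 1))`, the series has block sums of norm at most
`6 / (m + 1) ^ 2`, so the grouped series converges absolutely, i.e. the partial sums converge
along the subsequence `M`. Every other partial sum differs from the last preceding one of these by
a partial sum inside a block, of norm at most `7 / (m + 1) ^ 2 → 0`.
-/

open Filter Finset Topology

theorem summable_const_div_natCast_add_one_sq (c : ℝ) :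
    Summable fun m : ℕ => c / ((m : ℝ) + 1) ^ 2 := by
  have : Summable fun m : ℕ => 1 / ((m + 1 : ℕ) : ℝ) ^ 2 :=
    (summable_nat_add_iff 1).mpr (Real.summable_one_div_nat_pow.mpr one_lt_two)
  simpa [div_eq_mul_inv] using this.mul_left c

def blockIndex (M : ℕ → ℕ) (N : ℕ) : ℕ := Nat.findGreatest (fun j => M j ≤ N) N

section blockIndex

variable {M : ℕ → ℕ}

theorem apply_blockIndex_le (hM0 : M 0 = 0) (N : ℕ) : M (blockIndex M N) ≤ N :=
  Nat.findGreatest_spec (P := fun j => M j ≤ N) (Nat.zero_le N) (by simp [hM0])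

theorem le_blockIndex_of_apply_le {m N : ℕ} (hM : StrictMono M) (hN : M m ≤ N) :
    m ≤ blockIndex M N :=
  Nat.le_findGreatest ((hM.id_le m).trans hN) hN

theorem lt_apply_blockIndex_succ (hM : StrictMono M) (N : ℕ) : N < M (blockIndex M N + 1) := by
  by_contra! hle
  have := le_blockIndex_of_apply_le hM hle
  omega

theorem tendsto_blockIndex (hM : StrictMono M) : Tendsto (blockIndex M) atTop atTop :=
  tendsto_atTop_atTop.2 fun m => ⟨M m, fun _ => le_blockIndex_of_apply_le hM⟩

end blockIndex

theorem sum_range_apply_eq_sum_blocks {E : Type*} [AddCommMonoid E] (f : ℕ → E) {M : ℕ → ℕ}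
    (hM0 : M 0 = 0) (hM : Monotone M) (k : ℕ) :
    ∑ i ∈ range (M k), f i = ∑ j ∈ range k, ∑ i ∈ Ico (M j) (M (j + 1)), f i := by
  induction k with
  | zero => simp [hM0]
  | succ k ih =>
    rw [sum_range_succ, ← ih, range_eq_Ico, range_eq_Ico,
      sum_Ico_consecutive _ (Nat.zero_le _) (hM k.le_succ)]

theorem tendsto_sum_range_of_hasSum_blocks {E : Type*} [SeminormedAddCommGroup E] {f : ℕ → E}
    {M : ℕ → ℕ} (hM0 : M 0 = 0) (hM : StrictMono M) {l : E} {δ : ℕ → ℝ}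
    (hblocks : HasSum (fun m => ∑ i ∈ Ico (M m) (M (m + 1)), f i) l)
    (hδ : Tendsto δ atTop (𝓝 0))
    (hpartial : ∀ m k, M m ≤ k → k < M (m + 1) → ‖∑ i ∈ Ico (M m) k, f i‖ ≤ δ m) :
    Tendsto (fun N => ∑ i ∈ range N, f i) atTop (𝓝 l) := by
  have hstart : Tendsto (fun N => ∑ i ∈ range (M (blockIndex M N)), f i) atTop (𝓝 l) := by
    simp only [sum_range_apply_eq_sum_blocks f hM0 hM.monotone]
    exact hblocks.tendsto_sum_nat.comp (tendsto_blockIndex hM)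
  have htail : Tendsto (fun N => ∑ i ∈ Ico (M (blockIndex M N)) N, f i) atTop (𝓝 0) :=
    squeeze_zero_norm (fun N => hpartial _ N (apply_blockIndex_le hM0 N)
      (lt_apply_blockIndex_succ hM N)) (hδ.comp (tendsto_blockIndex hM))
  simpa [sum_range_add_sum_Ico _ (apply_blockIndex_le hM0 _)] using hstart.add htail

theorem stmt14_general (a : ℕ → EuclideanSpace ℝ (Fin 2))
    (M : ℕ → ℕ) (hM0 : M 0 = 0) (hMmono : StrictMono M)
    (ε : ℕ → ℝ)
    (hsum : ∀ m, ‖∑ i ∈ Finset.Ico (M m) (M (m + 1)), ε i • a i‖ ≤ 6 / ((m : ℝ) + 1) ^ 2)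
    (hpartial : ∀ m, ∀ k, M m ≤ k → k ≤ M (m + 1) →
      ‖∑ i ∈ Finset.Ico (M m) k, ε i • a i‖ ≤ 7 / ((m : ℝ) + 1) ^ 2) :
    ∃ l, Tendsto (fun N => ∑ i ∈ Finset.range N, ε i • a i) atTop (nhds l) := by
  have hblocks : Summable fun m => ∑ i ∈ Ico (M m) (M (m + 1)), ε i • a i :=
    .of_norm_bounded (summable_const_div_natCast_add_one_sq 6) hsum
  exact ⟨_, tendsto_sum_range_of_hasSum_blocks hM0 hMmono hblocks.hasSum
    (summable_const_div_natCast_add_one_sq 7).tendsto_atTop_zero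
    fun m k hk hk' => hpartial m k hk hk'.le⟩

theorem stmt14 (a : ℕ → EuclideanSpace ℝ (Fin 2))
    (h : Tendsto (fun n => ‖a n‖) atTop (nhds 0))
    (M : ℕ → ℕ) (hM0 : M 0 = 0) (hMmono : StrictMono M)
    (hblock : ∀ m, ∀ i, M m ≤ i → i < M (m + 1) → ‖a i‖ < 1 / ((m : ℝ) + 1) ^ 2)
    (ε : ℕ → ℝ) (hε : ∀ i, ε i = 1 ∨ ε i = -1)
    (hsum : ∀ m, ‖∑ i ∈ Finset.Ico (M m) (M (m + 1)), ε i • a i‖ ≤ 6 / ((m : ℝ) + 1) ^ 2)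
    (hpartial : ∀ m, ∀ k, M m ≤ k → k ≤ M (m + 1) →
      ‖∑ i ∈ Finset.Ico (M m) k, ε i • a i‖ ≤ 7 / ((m : ℝ) + 1) ^ 2) :
    ∃ l, Tendsto (fun N => ∑ i ∈ Finset.range N, ε i • a i) atTop (nhds l) :=
  stmt14_general a M hM0 hMmono ε hsum hpartial
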